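/- arXiv:2111.14169 — 3 statements merged into one kernel-verified Lean document; each statement's English description precedes it below -/
import Mathlib

section
/- Let M be a left module over the Hecke algebra H_n(q), let Σ(M) = ∑_{i=1}^{n−1} {u ∈ M : T_i u = q u} and Υ(M) = ⋂_{i=1}^{n−1} (T_i − q)M. Then y_n M ⊆ Υ(M) and y_n Σ(M) = 0; moreover if [n]!_q ≠ 0 then the map induced by the action of y_n gives a linear bijection M/Σ(M) → Υ(M), and M = Υ(M) ⊕ Σ(M). -/
/-!
Pairing each `σ` with `σ s_i` (resp. `s_i σ`), exactly one of which is an ascent, and using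
`T_σ T_i = T_{σ s_i}` on ascents, the coefficients of consecutive lengths combine so that
`y_n = z (T_i - q) = (T_i - q) z'` for every `i`; this gives `y_n M ⊆ Υ(M)` and `y_n Σ(M) = 0`.
Since `(T_i - q)(T_i + 1) = 0`, each `T_i` acts as `-1` on `Υ(M)`, and as `-1` modulo `Σ(M)` on all
of `M`; by induction on length `T_σ` then acts as `(-1)^{ℓ(σ)}` in both senses, so `y_n` acts as
`∑_σ q^{ℓ_n - ℓ(σ)} = [n]!_q`. When `[n]!_q ≠ 0`, `[n]!_q⁻¹ y_n` is therefore a projection of `M`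
onto `Υ(M)` with kernel `Σ(M)`. The `q`-factorial formula follows from writing `σ ∈ S_{n+1}` as
the cycle `(σ(n) … n)` times some `σ' ∈ S_n`, which adds `n - σ(n)` inversions.
-/

/-- The basic transposition `τ_i = (i, i+1)` (0-based) as a permutation of `ℕ`. -/
def tau (i : ℕ) : Equiv.Perm ℕ := Equiv.swap i (i + 1)

/-- The Coxeter length of a permutation of `{0, …, n-1}`, computed as its number of
inversions. -/
def invLen (n : ℕ) (σ : Equiv.Perm ℕ) : ℕ :=
  ((Finset.range n ×ˢ Finset.range n).filter (fun p => p.1 < p.2 ∧ σ p.2 < σ p.1)).card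

/-- The canonical embedding of the symmetric group `S_n = Perm (Fin n)` into the
permutations of `ℕ` (fixing every `m ≥ n`). -/
def permOfFin {n : ℕ} (σ : Equiv.Perm (Fin n)) : Equiv.Perm ℕ :=
  σ.extendDomain Fin.equivSubtype

/-- The action of an algebra element `h : H` on an `H`-module `M`, as a `K`-linear map. -/
def hSmulLin {K H M : Type*} [Field K] [Ring H] [Algebra K H]
    [AddCommGroup M] [Module K M] [Module H M] [SMulCommClass K H M] (h : H) :
    M →ₗ[K] M where
  toFun m := h • m
  map_add' := smul_add h
  map_smul' c m := (smul_comm c h m).symm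

open Equiv Finset

local notation "𝔖" n:max => fixingSubgroup (Perm ℕ) (Set.Ici n)

section Permutations

variable {n : ℕ}

theorem mem_fixingSubgroup_Ici {π : Perm ℕ} : π ∈ 𝔖 n ↔ ∀ m, n ≤ m → π m = m := by
  simp [mem_fixingSubgroup_iff, Perm.smul_def]

theorem apply_lt_of_mem_fixingSubgroup_Ici {π : Perm ℕ} (hπ : π ∈ 𝔖 n) {m : ℕ} (hm : m < n) :
    π m < n := by
  by_contra! h
  have := mem_fixingSubgroup_Ici.1 (inv_mem hπ) (π m) h
  simp only [Perm.coe_inv, symm_apply_apply] at this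
  omega

theorem tau_apply (i x : ℕ) : tau i x = if x = i then i + 1 else if x = i + 1 then i else x := by
  simp [tau, swap_apply_def]

theorem tau_mul_self (i : ℕ) : tau i * tau i = 1 := swap_mul_self _ _

theorem tau_inv (i : ℕ) : (tau i)⁻¹ = tau i := swap_inv _ _

theorem tau_mem {i : ℕ} (hi : i + 1 < n) : tau i ∈ 𝔖 n :=
  mem_fixingSubgroup_Ici.2 fun m hm => swap_apply_of_ne_of_ne (by omega) (by omega)

theorem permOfFin_mul (σ ρ : Perm (Fin n)) : permOfFin (σ * ρ) = permOfFin σ * permOfFin ρ :=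
  map_mul (Perm.extendDomainHom Fin.equivSubtype) σ ρ

theorem permOfFin_injective : Function.Injective (permOfFin (n := n)) :=
  Perm.extendDomainHom_injective _

theorem permOfFin_mem (σ : Perm (Fin n)) : permOfFin σ ∈ 𝔖 n :=
  mem_fixingSubgroup_Ici.2 fun _ hm =>
    Perm.extendDomain_apply_not_subtype σ Fin.equivSubtype (not_lt.2 hm)

theorem permOfFin_apply (σ : Perm (Fin n)) {m : ℕ} (hm : m < n) :
    permOfFin σ m = σ ⟨m, hm⟩ :=
  Perm.extendDomain_apply_image σ Fin.equivSubtype ⟨m, hm⟩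

theorem permOfFin_swap {i : ℕ} (hi : i + 1 < n) :
    permOfFin (swap (⟨i, by omega⟩ : Fin n) ⟨i + 1, hi⟩) = tau i := by
  ext m
  by_cases hm : m < n
  · rw [permOfFin_apply _ hm, tau_apply, swap_apply_def]
    simp only [Fin.ext_iff]
    split_ifs <;> rfl
  · rw [mem_fixingSubgroup_Ici.1 (permOfFin_mem _) m (by omega),
      mem_fixingSubgroup_Ici.1 (tau_mem hi) m (by omega)]

theorem exists_permOfFin_eq {π : Perm ℕ} (hπ : π ∈ 𝔖 n) : ∃ σ : Perm (Fin n), permOfFin σ = π := by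
  have hlt : ∀ {m}, m < n → π m < n := apply_lt_of_mem_fixingSubgroup_Ici hπ
  have hmaps : ∀ m, π m < n ↔ m < n := fun m =>
    ⟨fun h => by_contra fun hm => by
      rw [mem_fixingSubgroup_Ici.1 hπ m (not_lt.1 hm)] at h; exact hm h, hlt⟩
  refine ⟨Fin.equivSubtype.symm.permCongr (π.subtypePerm hmaps), Perm.ext fun m => ?_⟩
  by_cases hm : m < n
  · simp [permOfFin_apply _ hm, Fin.equivSubtype]
  · rw [mem_fixingSubgroup_Ici.1 (permOfFin_mem _) m (not_lt.1 hm),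
      mem_fixingSubgroup_Ici.1 hπ m (not_lt.1 hm)]

end Permutations

section Inversions

variable {n : ℕ}

def invSet (n : ℕ) (π : Perm ℕ) : Finset (ℕ × ℕ) :=
  (range n ×ˢ range n).filter (fun p => p.1 < p.2 ∧ π p.2 < π p.1)

theorem invLen_eq_card_invSet (π : Perm ℕ) : invLen n π = (invSet n π).card := rfl

theorem mem_invSet {π : Perm ℕ} {a b : ℕ} :
    (a, b) ∈ invSet n π ↔ a < n ∧ b < n ∧ a < b ∧ π b < π a := by
  simp [invSet, and_assoc]

theorem invLen_one : invLen n 1 = 0 := by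
  rw [invLen_eq_card_invSet, card_eq_zero, invSet, filter_eq_empty_iff]
  exact fun _ _ => by simp only [Perm.coe_one, id_eq]; omega

theorem invLen_le (π : Perm ℕ) : invLen n π ≤ n * (n - 1) / 2 := by
  calc invLen n π ≤ #{p ∈ range n ×ˢ range n | p.1 < p.2} :=
        card_le_card fun p hp => by rw [mem_filter] at hp ⊢; exact ⟨hp.1, hp.2.1⟩
    _ = n * (n - 1) / 2 := by rw [card_product_filter_lt, card_range, Nat.choose_two_right]

theorem invLen_mul_tau_of_lt {π : Perm ℕ} {i : ℕ} (hi : i + 1 < n) (h : π i < π (i + 1)) :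
    invLen n (π * tau i) = invLen n π + 1 := by
  have hτ : ∀ {a}, a < n → tau i a < n := apply_lt_of_mem_fixingSubgroup_Ici (tau_mem hi)
  have hττ : ∀ a, tau i (tau i a) = a := swap_apply_self _ _
  have hmono : ∀ {a b}, a < b → (a, b) ≠ (i, i + 1) → tau i a < tau i b := by
    intro a b hab hne
    simp only [ne_eq, Prod.mk.injEq] at hne
    rw [tau_apply, tau_apply]
    split_ifs <;> omega
  have hmem : (i, i + 1) ∈ invSet n (π * tau i) := by
    rw [mem_invSet]
    simpa [tau, hi] using ⟨by omega, h⟩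
  -- conjugating by `tau i` matches the inversions of `π` with the other inversions of `π * tau i`
  have hcard : (invSet n π).card = ((invSet n (π * tau i)).erase (i, i + 1)).card := by
    refine card_bij' (fun p _ => (tau i p.1, tau i p.2)) (fun p _ => (tau i p.1, tau i p.2))
      ?_ ?_ (by simp [hττ]) (by simp [hττ])
    · rintro ⟨a, b⟩ hp
      obtain ⟨ha, hb, hab, hinv⟩ := mem_invSet.1 hp
      have hne : (a, b) ≠ (i, i + 1) := by rintro ⟨⟩; omega
      refine mem_erase.2 ⟨fun he => ?_, mem_invSet.2 ⟨hτ ha, hτ hb, hmono hab hne, ?_⟩⟩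
      · simp only [Prod.mk.injEq] at he
        rw [← hττ a, ← hττ b, he.1, he.2] at hab
        simp [tau] at hab
      · simpa [hττ] using hinv
    · rintro ⟨a, b⟩ hp
      obtain ⟨hne, hp⟩ := mem_erase.1 hp
      obtain ⟨ha, hb, hab, hinv⟩ := mem_invSet.1 hp
      exact mem_invSet.2 ⟨hτ ha, hτ hb, hmono hab hne, hinv⟩
  rw [invLen_eq_card_invSet, invLen_eq_card_invSet, hcard, card_erase_add_one hmem]

theorem invLen_mul_tau_of_gt {π : Perm ℕ} {i : ℕ} (hi : i + 1 < n) (h : π (i + 1) < π i) :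
    invLen n π = invLen n (π * tau i) + 1 := by
  have := invLen_mul_tau_of_lt (π := π * tau i) hi (by simpa [tau] using h)
  rwa [mul_assoc, tau_mul_self, mul_one] at this

theorem invLen_mul_tau {i : ℕ} (hi : i + 1 < n) (π : Perm ℕ) :
    invLen n (π * tau i) = invLen n π + 1 ∨ invLen n π = invLen n (π * tau i) + 1 :=
  (lt_or_gt_of_ne (π.injective.ne (show i ≠ i + 1 by omega))).imp
    (invLen_mul_tau_of_lt hi) (invLen_mul_tau_of_gt hi)

theorem invLen_tau {i : ℕ} (hi : i + 1 < n) : invLen n (tau i) = 1 := by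
  simpa [invLen_one] using invLen_mul_tau_of_lt (π := 1) hi (by simp)

theorem invLen_inv {π : Perm ℕ} (hπ : π ∈ 𝔖 n) : invLen n π⁻¹ = invLen n π := by
  have hlt : ∀ {m}, m < n → π m < n := apply_lt_of_mem_fixingSubgroup_Ici hπ
  have hlt' : ∀ {m}, m < n → π⁻¹ m < n := apply_lt_of_mem_fixingSubgroup_Ici (inv_mem hπ)
  refine card_bij' (fun p _ => (π⁻¹ p.2, π⁻¹ p.1)) (fun p _ => (π p.2, π p.1)) ?_ ?_
    (by simp) (by simp)
  · rintro ⟨a, b⟩ hp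
    obtain ⟨ha, hb, hab, hinv⟩ := mem_invSet.1 hp
    exact mem_invSet.2 ⟨hlt' hb, hlt' ha, hinv, by simpa using hab⟩
  · rintro ⟨a, b⟩ hp
    obtain ⟨ha, hb, hab, hinv⟩ := mem_invSet.1 hp
    exact mem_invSet.2 ⟨hlt hb, hlt ha, hinv, by simpa using hab⟩

theorem invLen_tau_mul_eq {i : ℕ} (hi : i + 1 < n) {π : Perm ℕ} (hπ : π ∈ 𝔖 n) :
    invLen n (tau i * π) = invLen n (π⁻¹ * tau i) := by
  rw [← invLen_inv (mul_mem (tau_mem hi) hπ), mul_inv_rev, tau_inv]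

theorem invLen_tau_mul_of_lt {i : ℕ} (hi : i + 1 < n) {π : Perm ℕ} (hπ : π ∈ 𝔖 n)
    (h : π⁻¹ i < π⁻¹ (i + 1)) : invLen n (tau i * π) = invLen n π + 1 := by
  rw [invLen_tau_mul_eq hi hπ, invLen_mul_tau_of_lt hi h, invLen_inv hπ]

theorem invLen_tau_mul {i : ℕ} (hi : i + 1 < n) {π : Perm ℕ} (hπ : π ∈ 𝔖 n) :
    invLen n (tau i * π) = invLen n π + 1 ∨ invLen n π = invLen n (tau i * π) + 1 := by
  rw [invLen_tau_mul_eq hi hπ, ← invLen_inv hπ]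
  exact invLen_mul_tau hi π⁻¹

theorem exists_invLen_eq_invLen_mul_tau_add_one {π : Perm ℕ} (hπ : π ∈ 𝔖 n) (hne : π ≠ 1) :
    ∃ i, i + 1 < n ∧ invLen n π = invLen n (π * tau i) + 1 := by
  suffices ∃ i, i + 1 < n ∧ π (i + 1) < π i by
    obtain ⟨i, hi, h⟩ := this
    exact ⟨i, hi, invLen_mul_tau_of_gt hi h⟩
  by_contra! hasc
  -- without descents `π` is an order automorphism of `ℕ`, hence the identity
  have hmono : StrictMono π := strictMono_nat_of_lt_succ fun m => by
    have hne := π.injective.ne (show m ≠ m + 1 by omega)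
    rcases lt_trichotomy (m + 1) n with h | h | h
    · exact lt_of_le_of_ne (hasc m h) hne
    · rw [mem_fixingSubgroup_Ici.1 hπ (m + 1) h.ge, h]
      exact apply_lt_of_mem_fixingSubgroup_Ici hπ (by omega)
    · rw [mem_fixingSubgroup_Ici.1 hπ m (by omega), mem_fixingSubgroup_Ici.1 hπ (m + 1) h.le]
      omega
  refine hne (Perm.ext fun m => ?_)
  exact congrArg (· m) (Subsingleton.elim (hmono.orderIsoOfSurjective π π.surjective)
    (OrderIso.refl ℕ))

end Inversions

section PoincarePolynomial

variable {n : ℕ}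

theorem invLen_succ_of_mem {π : Perm ℕ} (hπ : π ∈ 𝔖 n) : invLen (n + 1) π = invLen n π := by
  have hn : π n = n := mem_fixingSubgroup_Ici.1 hπ n le_rfl
  rw [invLen_eq_card_invSet, invLen_eq_card_invSet]
  congr 1
  ext ⟨a, b⟩
  rw [mem_invSet, mem_invSet]
  constructor
  · rintro ⟨ha, hb, hab, hinv⟩
    obtain hb | rfl := Nat.lt_succ_iff_lt_or_eq.1 hb
    · exact ⟨by omega, hb, hab, hinv⟩
    · have := apply_lt_of_mem_fixingSubgroup_Ici hπ hab
      omega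
  · rintro ⟨ha, hb, hab, hinv⟩
    exact ⟨by omega, by omega, hab, hinv⟩

/-- The cycle `(k k+1 … n)`, as the product `tau k * tau (k+1) * … * tau (n-1)`. -/
def cycleIcc (k n : ℕ) : Perm ℕ := ((List.range' k (n - k)).map tau).prod

theorem cycleIcc_self (n : ℕ) : cycleIcc n n = 1 := by simp [cycleIcc]

theorem cycleIcc_eq_tau_mul {k : ℕ} (h : k < n) : cycleIcc k n = tau k * cycleIcc (k + 1) n := by
  rw [cycleIcc, cycleIcc, show n - k = n - (k + 1) + 1 by omega, List.range'_succ]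
  simp

theorem cycleIcc_apply {k : ℕ} (hk : k ≤ n) (j : ℕ) :
    cycleIcc k n j = if j < k then j else if j < n then j + 1 else if j = n then k else j := by
  induction h : n - k generalizing k with
  | zero =>
    rw [show k = n by omega, cycleIcc_self, Perm.one_apply]
    split_ifs <;> omega
  | succ d ih =>
    rw [cycleIcc_eq_tau_mul (by omega), Perm.mul_apply, ih (by omega) (by omega), tau_apply]
    split_ifs <;> omega

theorem cycleIcc_mem {k : ℕ} (hk : k ≤ n) : cycleIcc k n ∈ 𝔖 (n + 1) :=
  mem_fixingSubgroup_Ici.2 fun m hm => by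
    rw [cycleIcc_apply hk]
    split_ifs <;> omega

theorem cycleIcc_apply_self {k : ℕ} (hk : k ≤ n) : cycleIcc k n n = k := by
  rw [cycleIcc_apply hk]
  split_ifs <;> omega

theorem cycleIcc_apply_of_lt {k j : ℕ} (hk : k ≤ n) (hj : j < k) : cycleIcc k n j = j := by
  rw [cycleIcc_apply hk, if_pos hj]

theorem invLen_cycleIcc_mul {π : Perm ℕ} (hπ : π ∈ 𝔖 n) {k : ℕ} (hk : k ≤ n) :
    invLen (n + 1) (cycleIcc k n * π) = invLen n π + (n - k) := by
  induction h : n - k generalizing k with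
  | zero =>
    rw [show k = n by omega, cycleIcc_self, one_mul, invLen_succ_of_mem hπ, add_zero]
  | succ d ih =>
    set ρ := cycleIcc (k + 1) n * π
    have hρ : ρ ∈ 𝔖 (n + 1) :=
      mul_mem (cycleIcc_mem (by omega))
        (mem_fixingSubgroup_Ici.2 fun m hm => mem_fixingSubgroup_Ici.1 hπ m (by omega))
    have hρk : ρ⁻¹ k = π⁻¹ k := by
      rw [Perm.inv_eq_iff_eq, Perm.mul_apply, Perm.coe_inv, apply_symm_apply,
        cycleIcc_apply_of_lt (by omega) (Nat.lt_succ_self k)]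
    have hρk' : ρ⁻¹ (k + 1) = n := by
      rw [Perm.inv_eq_iff_eq, Perm.mul_apply, mem_fixingSubgroup_Ici.1 hπ n le_rfl,
        cycleIcc_apply_self (by omega)]
    have hasc : ρ⁻¹ k < ρ⁻¹ (k + 1) := by
      rw [hρk, hρk']
      exact apply_lt_of_mem_fixingSubgroup_Ici (inv_mem hπ) (by omega)
    rw [cycleIcc_eq_tau_mul (by omega), mul_assoc, invLen_tau_mul_of_lt (by omega) hρ hasc,
      ih (by omega) (by omega)]
    omega

theorem sum_perm_fin_succ {A : Type*} [AddCommMonoid A] (f : Perm ℕ → A) :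
    ∑ σ : Perm (Fin (n + 1)), f (permOfFin σ) =
      ∑ σ : Perm (Fin n), ∑ k : Fin (n + 1), f (cycleIcc k n * permOfFin σ) := by
  have hmem (p : Perm (Fin n) × Fin (n + 1)) : cycleIcc p.2 n * permOfFin p.1 ∈ 𝔖 (n + 1) :=
    mul_mem (cycleIcc_mem (Nat.lt_succ_iff.1 p.2.2))
      (mem_fixingSubgroup_Ici.2 fun m hm =>
        mem_fixingSubgroup_Ici.1 (permOfFin_mem p.1) m (by omega))
  choose e he using fun p => exists_permOfFin_eq (hmem p)
  have hen (p : Perm (Fin n) × Fin (n + 1)) : permOfFin (e p) n = p.2 := by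
    rw [he, Perm.mul_apply, mem_fixingSubgroup_Ici.1 (permOfFin_mem p.1) n le_rfl,
      cycleIcc_apply_self (Nat.lt_succ_iff.1 p.2.2)]
  rw [← Fintype.sum_prod_type']
  refine (Fintype.sum_bijective e ⟨fun p p' h => ?_, fun τ => ?_⟩ _ _ fun p => by rw [he]).symm
  · have h2 : p.2 = p'.2 := Fin.ext (by rw [← hen, ← hen, h])
    have h1 := congrArg permOfFin h
    rw [he, he, h2, mul_right_inj] at h1
    exact Prod.ext (permOfFin_injective h1) h2
  · set k := permOfFin τ n
    have hk : k ≤ n := Nat.lt_succ_iff.1 (apply_lt_of_mem_fixingSubgroup_Ici (permOfFin_mem τ)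
      (Nat.lt_succ_self n))
    have hπ : (cycleIcc k n)⁻¹ * permOfFin τ ∈ 𝔖 n := mem_fixingSubgroup_Ici.2 fun m hm => by
      rw [Perm.mul_apply, Perm.inv_eq_iff_eq]
      obtain rfl | hm := hm.eq_or_lt
      · exact (cycleIcc_apply_self hk).symm
      · rw [mem_fixingSubgroup_Ici.1 (permOfFin_mem τ) m hm,
          mem_fixingSubgroup_Ici.1 (cycleIcc_mem hk) m hm]
    obtain ⟨σ, hσ⟩ := exists_permOfFin_eq hπ
    refine ⟨(σ, ⟨k, Nat.lt_succ_iff.2 hk⟩), permOfFin_injective ?_⟩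
    rw [he, hσ, mul_inv_cancel_left]

end PoincarePolynomial

def qFactorial {K : Type*} [CommSemiring K] (q : K) (n : ℕ) : K :=
  ∏ m ∈ Icc 1 n, ∑ i ∈ range m, q ^ i

theorem sum_pow_sub_invLen {K : Type*} [CommSemiring K] (q : K) (n : ℕ) :
    ∑ σ : Perm (Fin n), q ^ (n * (n - 1) / 2 - invLen n (permOfFin σ)) = qFactorial q n := by
  induction n with
  | zero => simp [qFactorial]
  | succ n ih =>
    have hL : (n + 1) * (n + 1 - 1) / 2 = n * (n - 1) / 2 + n := by
      rw [← sum_range_id, sum_range_succ, sum_range_id]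
    have hterm (σ : Perm (Fin n)) (k : Fin (n + 1)) :
        q ^ ((n + 1) * (n + 1 - 1) / 2 - invLen (n + 1) (cycleIcc k n * permOfFin σ)) =
          q ^ (n * (n - 1) / 2 - invLen n (permOfFin σ)) * q ^ (k : ℕ) := by
      rw [invLen_cycleIcc_mul (permOfFin_mem σ) (Nat.lt_succ_iff.1 k.2), ← pow_add, hL]
      have := invLen_le (n := n) (permOfFin σ)
      congr 1
      omega
    rw [sum_perm_fin_succ (fun π => q ^ ((n + 1) * (n + 1 - 1) / 2 - invLen (n + 1) π))]
    simp only [hterm, ← mul_sum, ← sum_mul, ih, Fin.sum_univ_eq_sum_range (q ^ ·)]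
    rw [qFactorial, qFactorial, prod_Icc_succ_top (Nat.le_add_left 1 n)]

section Multiplicativity

variable {H : Type*} [Mul H] {n : ℕ} {T : Perm ℕ → H}

def MulOnReducedProducts (n : ℕ) (T : Perm ℕ → H) : Prop :=
  ∀ π σ : Perm ℕ, (∀ m, n ≤ m → π m = m) → (∀ m, n ≤ m → σ m = m) →
    invLen n (π * σ) = invLen n π + invLen n σ → T (π * σ) = T π * T σ

theorem MulOnReducedProducts.map_mul_tau (hT : MulOnReducedProducts n T) {π : Perm ℕ}
    (hπ : π ∈ 𝔖 n) {i : ℕ} (hi : i + 1 < n) (h : invLen n (π * tau i) = invLen n π + 1) :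
    T (π * tau i) = T π * T (tau i) :=
  hT _ _ (mem_fixingSubgroup_Ici.1 hπ) (mem_fixingSubgroup_Ici.1 (tau_mem hi))
    (by rw [h, invLen_tau hi])

theorem MulOnReducedProducts.map_tau_mul (hT : MulOnReducedProducts n T) {π : Perm ℕ}
    (hπ : π ∈ 𝔖 n) {i : ℕ} (hi : i + 1 < n) (h : invLen n (tau i * π) = invLen n π + 1) :
    T (tau i * π) = T (tau i) * T π :=
  hT _ _ (mem_fixingSubgroup_Ici.1 (tau_mem hi)) (mem_fixingSubgroup_Ici.1 hπ)
    (by rw [h, invLen_tau hi, add_comm])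

end Multiplicativity

section SignAction

variable {K H M : Type*} [Ring K] [Ring H] [AddCommGroup M] [Module K M] [Module H M]
  {n : ℕ} {T : Perm ℕ → H}

theorem smul_sub_neg_one_pow_smul_mem (hT1 : T 1 = 1) (hT : MulOnReducedProducts n T)
    (N : Submodule K M) {W : Set M} (hW : ∀ i, i + 1 < n → ∀ u ∈ W, T (tau i) • u ∈ W)
    (hN : ∀ i, i + 1 < n → ∀ u ∈ W, T (tau i) • u + u ∈ N) {π : Perm ℕ} (hπ : π ∈ 𝔖 n)
    {u : M} (hu : u ∈ W) : T π • u - ((-1 : K) ^ invLen n π) • u ∈ N := by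
  induction h : invLen n π generalizing π u with
  | zero =>
    obtain rfl : π = 1 := by
      by_contra hne
      obtain ⟨i, -, hi⟩ := exists_invLen_eq_invLen_mul_tau_add_one hπ hne
      omega
    simp [hT1]
  | succ ℓ ih =>
    obtain ⟨i, hi, hdesc⟩ := exists_invLen_eq_invLen_mul_tau_add_one hπ
      (by rintro rfl; simp [invLen_one] at h)
    have hπ' : π * tau i ∈ 𝔖 n := mul_mem hπ (tau_mem hi)
    have hTπ : T π = T (π * tau i) * T (tau i) := by
      conv_lhs => rw [← mul_one π, ← tau_mul_self i, ← mul_assoc]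
      exact hT.map_mul_tau hπ' hi (by rw [mul_assoc, tau_mul_self, mul_one]; omega)
    have key : T π • u - ((-1 : K) ^ (ℓ + 1)) • u =
        (T (π * tau i) • T (tau i) • u - ((-1 : K) ^ ℓ) • T (tau i) • u) +
          ((-1 : K) ^ ℓ) • (T (tau i) • u + u) := by
      rw [hTπ, mul_smul, pow_succ, mul_neg_one, neg_smul, smul_add]
      abel
    rw [key]
    exact add_mem (ih hπ' (hW i hi u hu) (by omega)) (N.smul_mem _ (hN i hi u hu))

end SignAction

theorem Fintype.sum_eq_sum_filter_add_comp {G A : Type*} [Fintype G] [AddCommMonoid A]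
    (e : G ≃ G) (p : G → Prop) [DecidablePred p] (he : ∀ g, p (e g) ↔ ¬ p g) (f : G → A) :
    ∑ g, f g = ∑ g with p g, (f g + f (e g)) := by
  rw [sum_add_distrib, ← sum_filter_add_sum_filter_not univ p f]
  congr 1
  exact (Finset.sum_equiv e (by simp [he]) (fun _ _ => rfl)).symm

section Antisymmetrizer

variable {K H : Type*} [CommRing K] [Ring H] [Algebra K H] {n : ℕ} {T : Perm ℕ → H}

def signCoeff (q : K) (n ℓ : ℕ) : K := (-1) ^ ℓ * q ^ (n * (n - 1) / 2 - ℓ)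

def antisymmetrizer (q : K) (n : ℕ) (T : Perm ℕ → H) : H :=
  ∑ σ : Perm (Fin n), signCoeff q n (invLen n (permOfFin σ)) • T (permOfFin σ)

variable {q : K}

theorem signCoeff_eq_neg_mul {ℓ : ℕ} (h : ℓ + 1 ≤ n * (n - 1) / 2) :
    signCoeff q n ℓ = -(q * signCoeff q n (ℓ + 1)) := by
  rw [signCoeff, signCoeff, show n * (n - 1) / 2 - ℓ = n * (n - 1) / 2 - (ℓ + 1) + 1 by omega]
  ring

theorem signCoeff_mul_neg_one_pow (ℓ : ℕ) :
    signCoeff q n ℓ * (-1) ^ ℓ = q ^ (n * (n - 1) / 2 - ℓ) := by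
  rw [signCoeff, mul_right_comm, ← mul_pow, neg_one_mul, neg_neg, one_pow, one_mul]

theorem smul_add_smul_mul_eq_smul_mul_sub (A B : H) {c d : K} (h : c = -(q * d)) :
    c • A + d • (A * B) = d • A * (B - algebraMap K H q) := by
  rw [mul_sub, ← Algebra.commutes, ← Algebra.smul_def, h, smul_mul_assoc, smul_smul]
  simp only [neg_smul, mul_comm q d]
  abel

theorem smul_add_smul_mul_eq_sub_mul_smul (A B : H) {c d : K} (h : c = -(q * d)) :
    c • A + d • (B * A) = (B - algebraMap K H q) * d • A := by
  rw [sub_mul, ← Algebra.smul_def, h, mul_smul_comm, smul_smul]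
  simp only [neg_smul, mul_comm q d]
  abel

theorem exists_antisymmetrizer_eq_mul_sub (hT : MulOnReducedProducts n T) {i : ℕ}
    (hi : i + 1 < n) : ∃ z, antisymmetrizer q n T = z * (T (tau i) - algebraMap K H q) := by
  classical
  set s : Perm (Fin n) := swap ⟨i, by omega⟩ ⟨i + 1, hi⟩
  have hs (σ : Perm (Fin n)) : permOfFin (σ * s) = permOfFin σ * tau i := by
    rw [permOfFin_mul, permOfFin_swap hi]
  let asc (σ : Perm (Fin n)) : Prop := invLen n (permOfFin σ * tau i) = invLen n (permOfFin σ) + 1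
  have hasc (σ : Perm (Fin n)) : asc (σ * s) ↔ ¬ asc σ := by
    simp only [asc, hs, mul_assoc, tau_mul_self, mul_one]
    have := invLen_mul_tau hi (permOfFin σ)
    omega
  rw [antisymmetrizer, Fintype.sum_eq_sum_filter_add_comp (Equiv.mulRight s) asc hasc]
  refine ⟨∑ σ with asc σ, signCoeff q n (invLen n (permOfFin σ) + 1) • T (permOfFin σ), ?_⟩
  refine (sum_congr rfl fun σ hσ => ?_).trans (sum_mul _ _ _).symm
  have hσ : invLen n (permOfFin σ * tau i) = invLen n (permOfFin σ) + 1 := (mem_filter.1 hσ).2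
  simp only [Equiv.coe_mulRight, hs, hσ]
  rw [hT.map_mul_tau (permOfFin_mem σ) hi hσ]
  exact smul_add_smul_mul_eq_smul_mul_sub _ _
    (signCoeff_eq_neg_mul (hσ ▸ invLen_le (permOfFin σ * tau i)))

theorem exists_antisymmetrizer_eq_sub_mul (hT : MulOnReducedProducts n T) {i : ℕ}
    (hi : i + 1 < n) : ∃ z, antisymmetrizer q n T = (T (tau i) - algebraMap K H q) * z := by
  classical
  set s : Perm (Fin n) := swap ⟨i, by omega⟩ ⟨i + 1, hi⟩
  have hs (σ : Perm (Fin n)) : permOfFin (s * σ) = tau i * permOfFin σ := by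
    rw [permOfFin_mul, permOfFin_swap hi]
  let asc (σ : Perm (Fin n)) : Prop := invLen n (tau i * permOfFin σ) = invLen n (permOfFin σ) + 1
  have hasc (σ : Perm (Fin n)) : asc (s * σ) ↔ ¬ asc σ := by
    simp only [asc, hs, ← mul_assoc, tau_mul_self, one_mul]
    have := invLen_tau_mul hi (permOfFin_mem σ)
    omega
  rw [antisymmetrizer, Fintype.sum_eq_sum_filter_add_comp (Equiv.mulLeft s) asc hasc]
  refine ⟨∑ σ with asc σ, signCoeff q n (invLen n (permOfFin σ) + 1) • T (permOfFin σ), ?_⟩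
  refine (sum_congr rfl fun σ hσ => ?_).trans (mul_sum _ _ _).symm
  have hσ : invLen n (tau i * permOfFin σ) = invLen n (permOfFin σ) + 1 := (mem_filter.1 hσ).2
  simp only [Equiv.coe_mulLeft, hs, hσ]
  rw [hT.map_tau_mul (permOfFin_mem σ) hi hσ]
  exact smul_add_smul_mul_eq_sub_mul_smul _ _
    (signCoeff_eq_neg_mul (hσ ▸ invLen_le (tau i * permOfFin σ)))

variable {M : Type*} [AddCommGroup M] [Module K M] [Module H M] [IsScalarTower K H M]

theorem antisymmetrizer_smul_sub_qFactorial_smul_mem (hT1 : T 1 = 1)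
    (hT : MulOnReducedProducts n T) (N : Submodule K M) {W : Set M}
    (hW : ∀ i, i + 1 < n → ∀ u ∈ W, T (tau i) • u ∈ W)
    (hN : ∀ i, i + 1 < n → ∀ u ∈ W, T (tau i) • u + u ∈ N) {u : M} (hu : u ∈ W) :
    antisymmetrizer q n T • u - qFactorial q n • u ∈ N := by
  rw [← sum_pow_sub_invLen, antisymmetrizer, sum_smul, sum_smul, ← sum_sub_distrib]
  refine sum_mem fun σ _ => ?_
  rw [← signCoeff_mul_neg_one_pow, smul_assoc, mul_smul, ← smul_sub]
  exact N.smul_mem _ (smul_sub_neg_one_pow_smul_mem hT1 hT N hW hN (permOfFin_mem σ) hu)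

end Antisymmetrizer

section Projection

variable {K M : Type*} [Field K] [AddCommGroup M] [Module K M] {f : M →ₗ[K] M} {c : K}
  {U S : Submodule K M}

theorem mem_of_apply_eq_zero_of_apply_sub_smul_mem (hc : c ≠ 0) (hS : ∀ u, f u - c • u ∈ S)
    {u : M} (hu : f u = 0) : u ∈ S := by
  have := S.smul_mem (-c⁻¹) (hS u)
  rwa [hu, zero_sub, smul_neg, neg_smul, neg_neg, inv_smul_smul₀ hc] at this

theorem exists_apply_eq_of_apply_eq_smul (hc : c ≠ 0) (hU : ∀ w ∈ U, f w = c • w) {w : M}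
    (hw : w ∈ U) : ∃ u, f u = w :=
  ⟨c⁻¹ • w, by rw [map_smul, hU w hw, inv_smul_smul₀ hc]⟩

/-- `c⁻¹ • f` is the projection onto `U` along `S`. -/
theorem isCompl_of_apply_sub_smul_mem (hc : c ≠ 0) (hfU : ∀ u, f u ∈ U) (hfS : ∀ u ∈ S, f u = 0)
    (hU : ∀ w ∈ U, f w = c • w) (hS : ∀ u, f u - c • u ∈ S) : IsCompl U S := by
  refine ⟨Submodule.disjoint_def.2 fun x hxU hxS => ?_, codisjoint_iff.2 ?_⟩
  · have := hU x hxU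
    rwa [hfS x hxS, eq_comm, smul_eq_zero, or_iff_right hc] at this
  · refine Submodule.eq_top_iff'.2 fun u => ?_
    rw [← add_sub_cancel (c⁻¹ • f u) u]
    refine Submodule.add_mem_sup (U.smul_mem _ (hfU u)) ?_
    have : u - c⁻¹ • f u = -c⁻¹ • (f u - c • u) := by
      rw [smul_sub, smul_smul, neg_mul, inv_mul_cancel₀ hc]
      module
    exact this ▸ S.smul_mem _ (hS u)

end Projection

section ActionMaps

variable {K H M : Type*} [Field K] [Ring H] [Algebra K H] [AddCommGroup M] [Module K M]
  [Module H M] [IsScalarTower K H M] [SMulCommClass K H M] {h : H} {q : K}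

theorem hSmulLin_sub_smul_id_apply (u : M) :
    (hSmulLin h - q • LinearMap.id : M →ₗ[K] M) u = (h - algebraMap K H q) • u := by
  simp only [LinearMap.sub_apply, LinearMap.smul_apply, LinearMap.id_apply, sub_smul,
    algebraMap_smul]
  rfl

theorem smul_mem_range_of_eq_sub_mul {x z : H} (hx : x = (h - algebraMap K H q) * z) (u : M) :
    x • u ∈ LinearMap.range (hSmulLin (K := K) (M := M) h - q • LinearMap.id) :=
  ⟨z • u, by rw [hSmulLin_sub_smul_id_apply, hx, mul_smul]⟩

theorem smul_eq_zero_of_eq_mul_sub {x z : H} (hx : x = z * (h - algebraMap K H q)) {u : M}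
    (hu : u ∈ LinearMap.ker (hSmulLin (K := K) (M := M) h - q • LinearMap.id)) : x • u = 0 := by
  rw [LinearMap.mem_ker, hSmulLin_sub_smul_id_apply] at hu
  rw [hx, mul_smul, hu, smul_zero]

theorem smul_add_self_mem_ker (hq : (h - algebraMap K H q) * (h + 1) = 0) (u : M) :
    h • u + u ∈ LinearMap.ker (hSmulLin (K := K) (M := M) h - q • LinearMap.id) := by
  rw [LinearMap.mem_ker, hSmulLin_sub_smul_id_apply]
  calc (h - algebraMap K H q) • (h • u + u) = ((h - algebraMap K H q) * (h + 1)) • u := by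
        rw [mul_smul, add_smul, one_smul]
    _ = 0 := by rw [hq, zero_smul]

theorem smul_add_self_eq_zero_of_mem_range (hq : (h - algebraMap K H q) * (h + 1) = 0) {w : M}
    (hw : w ∈ LinearMap.range (hSmulLin (K := K) (M := M) h - q • LinearMap.id)) :
    h • w + w = 0 := by
  obtain ⟨m, rfl⟩ := hw
  have hcomm : Commute (h - algebraMap K H q) (h + 1) :=
    ((Commute.refl h).sub_left (Algebra.commutes q h)).add_right (Commute.one_right _)
  rw [hSmulLin_sub_smul_id_apply]
  calc h • (h - algebraMap K H q) • m + (h - algebraMap K H q) • m =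
        ((h + 1) * (h - algebraMap K H q)) • m := by rw [mul_smul, add_smul, one_smul]
    _ = 0 := by rw [← hcomm.eq, hq, zero_smul]

end ActionMaps

theorem mem_range_sub_one_iff {n i : ℕ} : i ∈ range (n - 1) ↔ i + 1 < n := by
  rw [mem_range]
  omega

section HeckeModule

variable {K H : Type*} [Field K] [Ring H] [Algebra K H] (M : Type*) [AddCommGroup M] [Module K M]
  [Module H M] [SMulCommClass K H M] (q : K) (n : ℕ) (T : Perm ℕ → H)

/-- `Σ(M)`. -/
def sigmaSubmodule : Submodule K M :=
  ⨆ i ∈ range (n - 1), LinearMap.ker (hSmulLin (K := K) (M := M) (T (tau i)) - q • LinearMap.id)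

/-- `Υ(M)`. -/
def upsilonSubmodule : Submodule K M :=
  ⨅ i ∈ range (n - 1), LinearMap.range (hSmulLin (K := K) (M := M) (T (tau i)) - q • LinearMap.id)

variable {M q n T}

theorem ker_le_sigmaSubmodule {i : ℕ} (hi : i + 1 < n) :
    LinearMap.ker (hSmulLin (K := K) (M := M) (T (tau i)) - q • LinearMap.id) ≤
      sigmaSubmodule M q n T :=
  le_iSup₂_of_le i (mem_range_sub_one_iff.2 hi) le_rfl

theorem upsilonSubmodule_le_range {i : ℕ} (hi : i + 1 < n) :
    upsilonSubmodule M q n T ≤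
      LinearMap.range (hSmulLin (K := K) (M := M) (T (tau i)) - q • LinearMap.id) :=
  iInf₂_le_of_le i (mem_range_sub_one_iff.2 hi) le_rfl

variable [IsScalarTower K H M]

theorem antisymmetrizer_smul_mem_upsilonSubmodule (hT : MulOnReducedProducts n T) (u : M) :
    antisymmetrizer q n T • u ∈ upsilonSubmodule M q n T := by
  simp only [upsilonSubmodule, Submodule.mem_iInf, mem_range_sub_one_iff]
  intro i hi
  obtain ⟨z, hz⟩ := exists_antisymmetrizer_eq_sub_mul (q := q) hT hi
  exact smul_mem_range_of_eq_sub_mul hz u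

theorem antisymmetrizer_smul_eq_zero_of_mem_sigmaSubmodule (hT : MulOnReducedProducts n T)
    {u : M} (hu : u ∈ sigmaSubmodule M q n T) : antisymmetrizer q n T • u = 0 := by
  refine (iSup₂_le fun i hi => ?_ :
    sigmaSubmodule M q n T ≤ LinearMap.ker (hSmulLin (antisymmetrizer q n T))) hu
  obtain ⟨z, hz⟩ := exists_antisymmetrizer_eq_mul_sub (q := q) hT (mem_range_sub_one_iff.1 hi)
  exact fun v hv => smul_eq_zero_of_eq_mul_sub hz hv

theorem antisymmetrizer_smul_of_mem_upsilonSubmodule (hT1 : T 1 = 1)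
    (hT : MulOnReducedProducts n T)
    (hTq : ∀ i, i + 1 < n → (T (tau i) - algebraMap K H q) * (T (tau i) + 1) = 0) {w : M}
    (hw : w ∈ upsilonSubmodule M q n T) : antisymmetrizer q n T • w = qFactorial q n • w := by
  have hneg (i : ℕ) (hi : i + 1 < n) {v : M} (hv : v ∈ upsilonSubmodule M q n T) :
      T (tau i) • v + v = 0 :=
    smul_add_self_eq_zero_of_mem_range (hTq i hi) (upsilonSubmodule_le_range hi hv)
  refine sub_eq_zero.1 (antisymmetrizer_smul_sub_qFactorial_smul_mem hT1 hT ⊥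
    (fun i hi v hv => ?_) (fun i hi v hv => (hneg i hi hv).symm ▸ zero_mem _) hw)
  rw [eq_neg_of_add_eq_zero_left (hneg i hi hv)]
  exact neg_mem hv

theorem antisymmetrizer_smul_sub_qFactorial_smul_mem_sigmaSubmodule (hT1 : T 1 = 1)
    (hT : MulOnReducedProducts n T)
    (hTq : ∀ i, i + 1 < n → (T (tau i) - algebraMap K H q) * (T (tau i) + 1) = 0) (u : M) :
    antisymmetrizer q n T • u - qFactorial q n • u ∈ sigmaSubmodule M q n T :=
  antisymmetrizer_smul_sub_qFactorial_smul_mem hT1 hT _ (W := Set.univ) (fun _ _ _ _ => trivial)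
    (fun i hi v _ => ker_le_sigmaSubmodule hi (smul_add_self_mem_ker (hTq i hi) v)) trivial

end HeckeModule

/-- Let `M` be a left module over the Hecke algebra `H_n(q)`, with
`Σ(M) = ∑_{i} {u : T_i u = q u}` and `Υ(M) = ⋂_i (T_i − q)M`.  Then `y_n M ⊆ Υ(M)`
and `y_n Σ(M) = 0`; moreover if `[n]!_q ≠ 0` then the action of `y_n` induces a linear
bijection `M/Σ(M) → Υ(M)` and `M = Υ(M) ⊕ Σ(M)`. -/
theorem stmt4 {K H M : Type*} [Field K] [Ring H] [Algebra K H]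
    [AddCommGroup M] [Module K M] [Module H M] [IsScalarTower K H M] [SMulCommClass K H M]
    (q : K) (n : ℕ)
    (T : Equiv.Perm ℕ → H)
    (hT1 : T 1 = 1)
    (hTq : ∀ i : ℕ, i + 1 < n → (T (tau i) - algebraMap K H q) * (T (tau i) + 1) = 0)
    (hTmul : ∀ π σ : Equiv.Perm ℕ, (∀ m, n ≤ m → π m = m) → (∀ m, n ≤ m → σ m = m) →
      invLen n (π * σ) = invLen n π + invLen n σ → T (π * σ) = T π * T σ)
    (y : H)
    (hy : y = ∑ σ : Equiv.Perm (Fin n),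
      ((-1 : K) ^ invLen n (permOfFin σ) * q ^ (n * (n - 1) / 2 - invLen n (permOfFin σ))) •
        T (permOfFin σ))
    (Sig Ups : Submodule K M)
    (hSig : Sig = ⨆ i ∈ Finset.range (n - 1),
      LinearMap.ker (hSmulLin (K := K) (M := M) (T (tau i)) - q • LinearMap.id))
    (hUps : Ups = ⨅ i ∈ Finset.range (n - 1),
      LinearMap.range (hSmulLin (K := K) (M := M) (T (tau i)) - q • LinearMap.id)) :
    (∀ u : M, y • u ∈ Ups) ∧
    (∀ u ∈ Sig, y • u = (0 : M)) ∧
    ((∏ m ∈ Finset.Icc 1 n, ∑ i ∈ Finset.range m, q ^ i) ≠ 0 →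
      (∀ u : M, y • u = (0 : M) → u ∈ Sig) ∧
      (∀ w ∈ Ups, ∃ u : M, y • u = w) ∧
      IsCompl Ups Sig) := by
  have hy' : y = antisymmetrizer q n T := hy
  subst hy' hSig hUps
  refine ⟨antisymmetrizer_smul_mem_upsilonSubmodule hTmul,
    fun u => antisymmetrizer_smul_eq_zero_of_mem_sigmaSubmodule hTmul, fun hc => ?_⟩
  have hyUps (w : M) := antisymmetrizer_smul_of_mem_upsilonSubmodule (w := w) hT1 hTmul hTq
  have hySig := antisymmetrizer_smul_sub_qFactorial_smul_mem_sigmaSubmodule (M := M) hT1 hTmul hTq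
  exact ⟨fun u => mem_of_apply_eq_zero_of_apply_sub_smul_mem (f := hSmulLin _) hc hySig,
    fun w => exists_apply_eq_of_apply_eq_smul (f := hSmulLin _) hc hyUps,
    isCompl_of_apply_sub_smul_mem (f := hSmulLin _) hc
      (antisymmetrizer_smul_mem_upsilonSubmodule hTmul)
      (fun u => antisymmetrizer_smul_eq_zero_of_mem_sigmaSubmodule hTmul) hyUps hySig⟩
end

section
/- In the Hecke algebra H_{k+l+m}(q), the partial antisymmetrizers satisfy the associativity identity y_{k+l+m/k+l,m} · y_{k+l/k,l} = y_{k+l+m/k,l+m} · y_{l+m/l,m}^{(k)}, both sides being equal to y(S_{k+l+m}/S_{k,l,m}) for the Young subgroup S_{k,l,m} stabilizing {1,…,k}, {k+1,…,k+l}, {k+l+1,…,k+l+m}. -/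
/-- The cycle `i ↷ j`: for `i < j` it is `τ_i τ_{i+1} ⋯ τ_{j-1}`; for `i > j` it is
`τ_{i-1} ⋯ τ_{j+1} τ_j`; for `i = j` the identity. -/
def cyc (i j : ℕ) : Equiv.Perm ℕ :=
  if i ≤ j then ((List.range (j - i)).map (fun t => tau (i + t))).prod
  else ((List.range (i - j)).map (fun t => tau (i - 1 - t))).prod

/-- `σ` is a distinguished left coset representative of the Young subgroup `S_{a,b}`
of `S_{a+b}`: it is increasing on the blocks `{0,…,a-1}` and `{a,…,a+b-1}`. -/
def isDist (a b : ℕ) (σ : Equiv.Perm ℕ) : Prop :=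
  ∀ i : ℕ, i + 1 < a + b → i + 1 ≠ a → σ i < σ (i + 1)

open Classical in
/-- The partial antisymmetrizer `y_{a+b/a,b} = y(S_{a+b}/S_{a,b})
  = ∑_{d ∈ D(S_{a+b}/S_{a,b})} (−1)^{ℓ(d)} q^{ab − ℓ(d)} T_d`. -/
noncomputable def yQ {K H : Type*} [Field K] [Ring H] [Algebra K H]
    (T : Equiv.Perm ℕ → H) (q : K) (a b : ℕ) : H :=
  ∑ σ : Equiv.Perm (Fin (a + b)),
    if isDist a b (permOfFin σ) then
      ((-1 : K) ^ invLen (a + b) (permOfFin σ) * q ^ (a * b - invLen (a + b) (permOfFin σ))) •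
        T (permOfFin σ)
    else 0

/-- The `k`-step shift of a permutation: `σ^{(k)}` fixes `0,…,k-1` and permutes
`k, k+1, …` exactly as `σ` permutes `0, 1, …`. -/
def shiftPerm (k : ℕ) (σ : Equiv.Perm ℕ) : Equiv.Perm ℕ where
  toFun m := if m < k then m else σ (m - k) + k
  invFun m := if m < k then m else σ.symm (m - k) + k
  left_inv m := by
    by_cases h : m < k
    · simp [h]
    · have h' : ¬ (σ (m - k) + k < k) := by omega
      simp only [h, if_neg, h', if_false, Nat.add_sub_cancel, Equiv.symm_apply_apply]
      omega
  right_inv m := by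
    by_cases h : m < k
    · simp [h]
    · have h' : ¬ (σ.symm (m - k) + k < k) := by omega
      simp only [h, if_neg, h', if_false, Nat.add_sub_cancel, Equiv.apply_symm_apply]
      omega

open Classical in
/-- The `k`-step shift `y_{l+m/l,m}^{(k)}` of the partial antisymmetrizer
`y_{l+m/l,m}`, obtained via `T_i ↦ T_{k+i}` (on the standard basis, `T_d ↦ T_{d^{(k)}}`). -/
noncomputable def yQShift {K H : Type*} [Field K] [Ring H] [Algebra K H]
    (T : Equiv.Perm ℕ → H) (q : K) (k l m : ℕ) : H :=
  ∑ σ : Equiv.Perm (Fin (l + m)),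
    if isDist l m (permOfFin σ) then
      ((-1 : K) ^ invLen (l + m) (permOfFin σ) *
        q ^ (l * m - invLen (l + m) (permOfFin σ))) • T (shiftPerm k (permOfFin σ))
    else 0

/-- `σ` is a distinguished left coset representative of the Young subgroup `S_{k,l,m}`
of `S_{k+l+m}`: it is increasing on the three blocks. -/
def isDist3 (k l m : ℕ) (σ : Equiv.Perm ℕ) : Prop :=
  ∀ i : ℕ, i + 1 < k + l + m → i + 1 ≠ k → i + 1 ≠ k + l → σ i < σ (i + 1)

open Classical in
/-- The partial antisymmetrizer `y(S_{k+l+m}/S_{k,l,m})`. -/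
noncomputable def yQ3 {K H : Type*} [Field K] [Ring H] [Algebra K H]
    (T : Equiv.Perm ℕ → H) (q : K) (k l m : ℕ) : H :=
  ∑ σ : Equiv.Perm (Fin (k + l + m)),
    if isDist3 k l m (permOfFin σ) then
      ((-1 : K) ^ invLen (k + l + m) (permOfFin σ) *
        q ^ (k * l + k * m + l * m - invLen (k + l + m) (permOfFin σ))) •
          T (permOfFin σ)
    else 0

/-!
Every `d ∈ D(S_{k+l+m}/S_{k,l,m})` factors uniquely as `d = π * w` with `π` increasing on a
block of positions and `w` a permutation of that block. For the block `[0, k+l)` the factors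
range exactly over `D(S_{k+l+m}/S_{k+l,m})` and `D(S_{k+l}/S_{k,l})`; for the block
`[k, k+l+m)` over `D(S_{k+l+m}/S_{k,l+m})` and the `k`-shift of `D(S_{l+m}/S_{l,m})`. Here `w`
sorts the values of `d` on the block, and no inversion of `d` is lost or created:
`ℓ(d) = ℓ(π) + ℓ(w)`. Hence `T_d = T_π T_w` and the coefficients `(-1)^ℓ q^(N-ℓ)` multiply,
so expanding either product of antisymmetrizers term by term gives `y(S_{k+l+m}/S_{k,l,m})`.
-/

open Equiv

namespace PartialAntisymmetrizer

section Support

variable {α : Type*}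

def SupportedOn (S : Set α) (σ : Perm α) : Prop := ∀ x ∉ S, σ x = x

variable {S T : Set α} {σ τ : Perm α}

theorem SupportedOn.inv (h : SupportedOn S σ) : SupportedOn S σ⁻¹ := fun x hx => by
  rw [Perm.inv_eq_iff_eq, h x hx]

theorem SupportedOn.mul (hσ : SupportedOn S σ) (hτ : SupportedOn S τ) :
    SupportedOn S (σ * τ) := fun x hx => by
  rw [Perm.mul_apply, hτ x hx, hσ x hx]

theorem SupportedOn.mono (h : SupportedOn S σ) (hST : S ⊆ T) : SupportedOn T σ :=
  fun x hx => h x fun hxS => hx (hST hxS)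

theorem SupportedOn.apply_mem_iff (h : SupportedOn S σ) {x : α} : σ x ∈ S ↔ x ∈ S := by
  refine ⟨fun hσx => ?_, fun hx => ?_⟩
  · by_contra hx
    rw [h x hx] at hσx
    exact hx hσx
  · by_contra hσx
    rw [σ.injective (h _ hσx)] at hσx
    exact hσx hx

theorem SupportedOn.mul_eqOn_compl (h : SupportedOn S σ) (τ : Perm α) :
    Set.EqOn ⇑(τ * σ) τ Sᶜ := fun x hx => by
  rw [Perm.mul_apply, h x hx]

theorem SupportedOn.strictMonoOn_mul_iff_of_subset_compl [Preorder α] (h : SupportedOn S σ)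
    (hT : T ⊆ Sᶜ) : StrictMonoOn ⇑(τ * σ) T ↔ StrictMonoOn τ T :=
  ((h.mul_eqOn_compl τ).mono hT).congr_strictMonoOn

theorem SupportedOn.supportedOn_mul_iff (h : SupportedOn S σ) (hST : S ⊆ T) :
    SupportedOn T (τ * σ) ↔ SupportedOn T τ := by
  refine forall₂_congr fun x hx => ?_
  rw [h.mul_eqOn_compl τ fun hxS => hx (hST hxS)]

theorem supportedOn_extendDomain {β : Type*} {p : β → Prop} [DecidablePred p]
    (f : α ≃ Subtype p) (σ : Perm α) : SupportedOn {x | p x} (σ.extendDomain f) :=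
  fun _ hx => Perm.extendDomain_apply_not_subtype σ f hx

theorem SupportedOn.exists_extendDomain_eq {β : Type*} {p : β → Prop} [DecidablePred p]
    (f : α ≃ Subtype p) {w : Perm β} (hw : SupportedOn {x | p x} w) :
    ∃ σ : Perm α, σ.extendDomain f = w := by
  refine ⟨f.symm.permCongr (w.subtypePerm fun x => hw.apply_mem_iff), ?_⟩
  ext x
  by_cases hx : p x
  · simp [Perm.extendDomain_apply_subtype _ _ hx, Equiv.permCongr_apply]
  · rw [Perm.extendDomain_apply_not_subtype _ _ hx, hw x hx]

theorem SupportedOn.apply_lt_apply [LinearOrder α] [S.OrdConnected] (h : SupportedOn S σ)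
    {i j : α} (hij : i < j) (hout : i ∉ S ∨ j ∉ S) : σ i < σ j := by
  by_contra hle
  push Not at hle
  rcases hout with hi | hj
  · rw [h i hi] at hle
    by_cases hj : j ∈ S
    · exact hi (Set.OrdConnected.out' (h.apply_mem_iff.2 hj) hj ⟨hle, hij.le⟩)
    · rw [h j hj] at hle
      exact hle.not_gt hij
  · rw [h j hj] at hle
    have hi : i ∈ S := by_contra fun hi => by rw [h i hi] at hle; exact hle.not_gt hij
    exact hj (Set.OrdConnected.out' hi (h.apply_mem_iff.2 hi) ⟨hij.le, hle⟩)

theorem SupportedOn.lt_and_not_mem_iff [LinearOrder α] [S.OrdConnected] (h : SupportedOn S σ)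
    {i j : α} :
    (σ i < σ j ∧ ¬(σ i ∈ S ∧ σ j ∈ S)) ↔ (i < j ∧ ¬(i ∈ S ∧ j ∈ S)) := by
  have key : ∀ {u : Perm α}, SupportedOn S u → ∀ {i j : α}, i < j ∧ ¬(i ∈ S ∧ j ∈ S) →
      u i < u j ∧ ¬(u i ∈ S ∧ u j ∈ S) := fun hu _ _ ⟨hij, hout⟩ =>
    ⟨hu.apply_lt_apply hij (not_and_or.1 hout), by rwa [hu.apply_mem_iff, hu.apply_mem_iff]⟩
  refine ⟨fun hσ => ?_, key h⟩
  simpa using key h.inv hσ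

theorem StrictMonoOn.strictMonoOn_mul_iff_of_subset [LinearOrder α] (hτ : StrictMonoOn τ S)
    (hσ : SupportedOn S σ) (hTS : T ⊆ S) : StrictMonoOn ⇑(τ * σ) T ↔ StrictMonoOn σ T :=
  forall₂_congr fun _ hx => forall₂_congr fun _ hy => imp_congr_right fun _ =>
    hτ.lt_iff_lt (hσ.apply_mem_iff.2 (hTS hx)) (hσ.apply_mem_iff.2 (hTS hy))

end Support

section Sorting

variable {α : Type*} [LinearOrder α] {S : Finset α} {π π' u w w' : Perm α}

theorem SupportedOn.eq_one_of_strictMonoOn (hu : SupportedOn ↑S u) (hmono : StrictMonoOn u S) :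
    u = 1 := by
  have hfix : (fun t => u (S.orderEmbOfFin rfl t)) = S.orderEmbOfFin rfl :=
    Finset.orderEmbOfFin_unique rfl (fun t => hu.apply_mem_iff.2 (S.orderEmbOfFin_mem rfl t))
      fun s t hst => hmono (S.orderEmbOfFin_mem rfl s) (S.orderEmbOfFin_mem rfl t)
        ((S.orderEmbOfFin rfl).strictMono hst)
  ext x
  by_cases hx : x ∈ S
  · obtain ⟨t, rfl⟩ : x ∈ Set.range (S.orderEmbOfFin rfl) := by simpa using hx
    exact congrFun hfix t
  · exact hu x hx

theorem exists_supportedOn_strictMonoOn_mul (d : Perm α) (S : Finset α) :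
    ∃ u : Perm α, SupportedOn ↑S u ∧ StrictMonoOn ⇑(d * u) S := by
  let e := S.orderIsoOfFin rfl
  let f : Fin S.card → α := fun t => d (e t)
  refine ⟨(Tuple.sort f).extendDomain e.toEquiv, supportedOn_extendDomain _ _, ?_⟩
  intro x hx y hy hxy
  have hval : ∀ z (hz : z ∈ S), (d * (Tuple.sort f).extendDomain e.toEquiv) z
      = (f ∘ Tuple.sort f) (e.symm ⟨z, hz⟩) := fun z hz => by
    simp [Perm.extendDomain_apply_subtype _ _ (show z ∈ S from hz), f]
  refine lt_of_le_of_ne ?_ ((d * _).injective.ne hxy.ne)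
  rw [hval x hx, hval y hy]
  exact Tuple.monotone_sort f (e.symm.monotone (Subtype.mk_le_mk.2 hxy.le))

theorem exists_strictMonoOn_mul_eq (d : Perm α) (S : Finset α) :
    ∃ π w : Perm α, StrictMonoOn π S ∧ SupportedOn S w ∧ π * w = d := by
  obtain ⟨u, hu, hmono⟩ := exists_supportedOn_strictMonoOn_mul d S
  exact ⟨d * u, u⁻¹, hmono, hu.inv, by rw [mul_inv_cancel_right]⟩

theorem eq_of_mul_eq_mul (hπ : StrictMonoOn π S) (hπ' : StrictMonoOn π' S)
    (hw : SupportedOn S w) (hw' : SupportedOn S w') (h : π * w = π' * w') : π = π' ∧ w = w' := by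
  have hu : SupportedOn S (w' * w⁻¹) := hw'.mul hw.inv
  have hπu : π = π' * (w' * w⁻¹) := by rw [← mul_assoc, ← h, mul_inv_cancel_right]
  have hmono : StrictMonoOn (w' * w⁻¹) S := fun x hx y hy hxy => by
    have hlt := hπ hx hy hxy
    rw [hπu] at hlt
    exact (hπ'.lt_iff_lt (hu.apply_mem_iff.2 hx) (hu.apply_mem_iff.2 hy)).1 hlt
  obtain rfl : w' = w := mul_inv_eq_one.1 (hu.eq_one_of_strictMonoOn hmono)
  exact ⟨mul_right_cancel h, rfl⟩

theorem bijOn_mul_of_iff {A B C : Set (Perm α)} (hA : ∀ π ∈ A, StrictMonoOn π S)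
    (hB : ∀ w ∈ B, SupportedOn S w)
    (hC : ∀ π w : Perm α, StrictMonoOn π S → SupportedOn S w → (π * w ∈ C ↔ π ∈ A ∧ w ∈ B)) :
    Set.BijOn (fun p : Perm α × Perm α => p.1 * p.2) (A ×ˢ B) C := by
  refine ⟨fun p hp => (hC _ _ (hA _ hp.1) (hB _ hp.2)).2 hp, ?_, ?_⟩
  · rintro ⟨π, w⟩ ⟨hπ, hw⟩ ⟨π', w'⟩ ⟨hπ', hw'⟩ h
    obtain ⟨rfl, rfl⟩ := eq_of_mul_eq_mul (hA π hπ) (hA π' hπ') (hB w hw) (hB w' hw') h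
    rfl
  · intro d hd
    obtain ⟨π, w, hπ, hw, rfl⟩ := exists_strictMonoOn_mul_eq d S
    exact ⟨(π, w), (hC π w hπ hw).1 hd, rfl⟩

end Sorting

section Ascents

theorem strictMonoOn_iff_lt_add_one {β : Type*} [Preorder β] {f : ℕ → β} {s : Set ℕ}
    [s.OrdConnected] : StrictMonoOn f s ↔ ∀ i ∈ s, i + 1 ∈ s → f i < f (i + 1) := by
  refine ⟨fun hf i hi hi' => hf hi hi' (Nat.lt_add_one i), fun hf => ?_⟩
  exact strictMonoOn_of_lt_succ inferInstance fun i _ hi hi' => by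
    simpa only [Order.succ_eq_add_one] using hf i hi hi'

theorem isDist_iff {a b : ℕ} {σ : Perm ℕ} :
    isDist a b σ ↔ StrictMonoOn σ (Set.Iio a) ∧ StrictMonoOn σ (Set.Ico a (a + b)) := by
  simp only [strictMonoOn_iff_lt_add_one, Set.mem_Iio, Set.mem_Ico, isDist]
  refine ⟨fun h => ⟨fun i _ hi => h i (by omega) (by omega),
    fun i _ hi => h i (by omega) (by omega)⟩, fun ⟨h₁, h₂⟩ i hi ha => ?_⟩
  rcases lt_or_gt_of_ne ha with ha | ha
  · exact h₁ i (by omega) ha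
  · exact h₂ i ⟨by omega, by omega⟩ ⟨by omega, hi⟩

theorem isDist3_iff {k l m : ℕ} {σ : Perm ℕ} :
    isDist3 k l m σ ↔ StrictMonoOn σ (Set.Iio k) ∧ StrictMonoOn σ (Set.Ico k (k + l)) ∧
      StrictMonoOn σ (Set.Ico (k + l) (k + l + m)) := by
  simp only [strictMonoOn_iff_lt_add_one, Set.mem_Iio, Set.mem_Ico, isDist3]
  refine ⟨fun h => ⟨fun i _ hi => h i (by omega) (by omega) (by omega),
    fun i _ hi => h i (by omega) (by omega) (by omega),
    fun i _ hi => h i (by omega) (by omega) (by omega)⟩, fun ⟨h₁, h₂, h₃⟩ i hi hk hkl => ?_⟩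
  rcases lt_or_gt_of_ne hk with hk | hk
  · exact h₁ i (by omega) hk
  rcases lt_or_gt_of_ne hkl with hkl | hkl
  · exact h₂ i ⟨by omega, by omega⟩ ⟨by omega, hkl⟩
  · exact h₃ i ⟨by omega, by omega⟩ ⟨by omega, hi⟩

end Ascents

section Inversions

def inversions (n : ℕ) (σ : Perm ℕ) : Finset (ℕ × ℕ) :=
  (Finset.range n ×ˢ Finset.range n).filter fun p => p.1 < p.2 ∧ σ p.2 < σ p.1

theorem invLen_eq_card_inversions (n : ℕ) (σ : Perm ℕ) : invLen n σ = (inversions n σ).card :=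
  rfl

theorem mem_inversions {n : ℕ} {σ : Perm ℕ} {p : ℕ × ℕ} :
    p ∈ inversions n σ ↔ (p.1 < n ∧ p.2 < n) ∧ p.1 < p.2 ∧ σ p.2 < σ p.1 := by
  simp [inversions]

variable {n : ℕ} {π σ w : Perm ℕ}

theorem invLen_le_mul {a b : ℕ} (h₁ : StrictMonoOn σ (Set.Iio a))
    (h₂ : StrictMonoOn σ (Set.Ico a (a + b))) : invLen (a + b) σ ≤ a * b := by
  calc invLen (a + b) σ ≤ (Finset.range a ×ˢ Finset.Ico a (a + b)).card := by
        refine Finset.card_le_card fun p hp => ?_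
        obtain ⟨⟨-, hj⟩, hij, hinv⟩ := mem_inversions.1 hp
        have hi : p.1 < a := by
          by_contra hi
          exact (h₂ ⟨not_lt.1 hi, by omega⟩ ⟨by omega, hj⟩ hij).not_gt hinv
        have hj' : a ≤ p.2 := by
          by_contra hj'
          exact (h₁ hi (not_le.1 hj') hij).not_gt hinv
        simp [hi, hj', hj]
    _ = a * b := by simp

theorem SupportedOn.invLen_eq (hσ : SupportedOn (Set.Iio n) σ) {N : ℕ} (hN : n ≤ N) :
    invLen N σ = invLen n σ := by
  rw [invLen_eq_card_inversions, invLen_eq_card_inversions]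
  refine congrArg Finset.card (Finset.ext fun p => ?_)
  simp only [mem_inversions]
  refine ⟨fun ⟨_, hij, hinv⟩ => ⟨?_, hij, hinv⟩,
    fun ⟨_, hij, hinv⟩ => ⟨⟨by omega, by omega⟩, hij, hinv⟩⟩
  have hj : p.2 < n := by_contra fun hj => (hσ.apply_lt_apply hij (Or.inr hj)).not_gt hinv
  exact ⟨hij.trans hj, hj⟩

variable {S : Set ℕ} [S.OrdConnected]

open Classical in
theorem filter_mem_inversions_mul (hπ : StrictMonoOn π S) (hw : SupportedOn S w) :
    (inversions n (π * w)).filter (fun p => p.1 ∈ S ∧ p.2 ∈ S) = inversions n w := by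
  ext p
  simp only [Finset.mem_filter, mem_inversions, Perm.mul_apply]
  constructor
  · rintro ⟨⟨hn, hij, hinv⟩, hi, hj⟩
    exact ⟨hn, hij, (hπ.lt_iff_lt (hw.apply_mem_iff.2 hj) (hw.apply_mem_iff.2 hi)).1 hinv⟩
  · rintro ⟨hn, hij, hinv⟩
    have hin : p.1 ∈ S ∧ p.2 ∈ S := by
      by_contra hout
      exact (hw.apply_lt_apply hij (not_and_or.1 hout)).not_gt hinv
    exact ⟨⟨hn, hij, (hπ.lt_iff_lt (hw.apply_mem_iff.2 hin.2) (hw.apply_mem_iff.2 hin.1)).2 hinv⟩,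
      hin⟩

open Classical in
theorem card_filter_not_mem_inversions_mul (hSn : S ⊆ Set.Iio n) (hπ : StrictMonoOn π S)
    (hw : SupportedOn S w) :
    ((inversions n (π * w)).filter fun p => ¬(p.1 ∈ S ∧ p.2 ∈ S)).card = (inversions n π).card := by
  have hπS : (inversions n π).filter (fun p => ¬(p.1 ∈ S ∧ p.2 ∈ S)) = inversions n π :=
    Finset.filter_true_of_mem fun p hp hin =>
      (hπ hin.1 hin.2 (mem_inversions.1 hp).2.1).not_gt (mem_inversions.1 hp).2.2
  rw [← hπS]
  have hwn : SupportedOn (Set.Iio n) w := hw.mono hSn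
  refine Finset.card_nbij' (Prod.map w w) (Prod.map ⇑w⁻¹ ⇑w⁻¹) ?_ ?_
    (fun p _ => by simp [Prod.map]) (fun p _ => by simp [Prod.map])
  · rintro ⟨i, j⟩ hp
    simp only [Finset.mem_coe, Finset.mem_filter, mem_inversions, Prod.map_fst, Prod.map_snd,
      Perm.mul_apply] at hp ⊢
    obtain ⟨⟨⟨hi, hj⟩, hij, hinv⟩, hout⟩ := hp
    obtain ⟨hwij, hwout⟩ := hw.lt_and_not_mem_iff.2 ⟨hij, hout⟩
    exact ⟨⟨⟨hwn.apply_mem_iff.2 hi, hwn.apply_mem_iff.2 hj⟩, hwij, hinv⟩, hwout⟩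
  · rintro ⟨i, j⟩ hp
    simp only [Finset.mem_coe, Finset.mem_filter, mem_inversions, Prod.map_fst, Prod.map_snd,
      Perm.mul_apply, Perm.coe_inv, Equiv.apply_symm_apply] at hp ⊢
    obtain ⟨⟨⟨hi, hj⟩, hij, hinv⟩, hout⟩ := hp
    obtain ⟨hwij, hwout⟩ := hw.inv.lt_and_not_mem_iff.2 ⟨hij, hout⟩
    exact ⟨⟨⟨hwn.inv.apply_mem_iff.2 hi, hwn.inv.apply_mem_iff.2 hj⟩, hwij, hinv⟩, hwout⟩

theorem invLen_mul (hSn : S ⊆ Set.Iio n) (hπ : StrictMonoOn π S) (hw : SupportedOn S w) :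
    invLen n (π * w) = invLen n π + invLen n w := by
  classical
  rw [invLen_eq_card_inversions,
    ← Finset.card_filter_add_card_filter_not (fun p : ℕ × ℕ => p.1 ∈ S ∧ p.2 ∈ S),
    filter_mem_inversions_mul hπ hw, card_filter_not_mem_inversions_mul hSn hπ hw, add_comm]
  rfl

end Inversions

section Shift

variable {k : ℕ} {σ : Perm ℕ}

def addEquivIci (k : ℕ) : ℕ ≃ {j // k ≤ j} where
  toFun j := ⟨j + k, Nat.le_add_left k j⟩
  invFun j := j.1 - k
  left_inv j := Nat.add_sub_cancel j k
  right_inv j := Subtype.ext (Nat.sub_add_cancel j.2)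

theorem shiftPerm_apply_of_lt {i : ℕ} (hi : i < k) : shiftPerm k σ i = i := if_pos hi

theorem shiftPerm_apply_add (i : ℕ) : shiftPerm k σ (i + k) = σ i + k := by
  simp [shiftPerm]

theorem shiftPerm_eq_extendDomain (k : ℕ) (σ : Perm ℕ) :
    shiftPerm k σ = σ.extendDomain (addEquivIci k) := by
  ext m
  by_cases hm : k ≤ m
  · obtain ⟨i, rfl⟩ := Nat.exists_eq_add_of_le' hm
    rw [Perm.extendDomain_apply_subtype _ _ hm, shiftPerm_apply_add]
    simp [addEquivIci]
  · rw [Perm.extendDomain_apply_not_subtype _ _ hm, shiftPerm_apply_of_lt (not_le.1 hm)]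

theorem supportedOn_Ici_shiftPerm : SupportedOn (Set.Ici k) (shiftPerm k σ) := by
  rw [shiftPerm_eq_extendDomain]
  exact supportedOn_extendDomain _ _

theorem shiftPerm_injective (k : ℕ) : Function.Injective (shiftPerm k) := fun σ τ h => by
  rw [shiftPerm_eq_extendDomain, shiftPerm_eq_extendDomain] at h
  exact Perm.extendDomainHom_injective _ h

theorem SupportedOn.exists_shiftPerm_eq {w : Perm ℕ} (hw : SupportedOn (Set.Ici k) w) :
    ∃ σ, shiftPerm k σ = w := by
  obtain ⟨σ, rfl⟩ := hw.exists_extendDomain_eq (addEquivIci k)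
  exact ⟨σ, shiftPerm_eq_extendDomain k σ⟩

theorem supportedOn_Ico_shiftPerm_iff {r : ℕ} :
    SupportedOn (Set.Ico k (k + r)) (shiftPerm k σ) ↔ SupportedOn (Set.Iio r) σ := by
  refine ⟨fun h i hi => ?_, fun h i hi => ?_⟩
  · have := h (i + k) (by simp only [Set.mem_Ico, Set.mem_Iio] at hi ⊢; omega)
    rwa [shiftPerm_apply_add, Nat.add_right_cancel_iff] at this
  · by_cases hik : k ≤ i
    · obtain ⟨i, rfl⟩ := Nat.exists_eq_add_of_le' hik
      rw [shiftPerm_apply_add, h i (by simp only [Set.mem_Ico, Set.mem_Iio] at hi ⊢; omega)]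
    · exact shiftPerm_apply_of_lt (not_le.1 hik)

theorem strictMonoOn_shiftPerm_Ico_iff {a b : ℕ} :
    StrictMonoOn (shiftPerm k σ) (Set.Ico (k + a) (k + b)) ↔ StrictMonoOn σ (Set.Ico a b) := by
  refine ⟨fun h i hi j hj hij => ?_, fun h i hi j hj hij => ?_⟩
  · have := h (a := i + k) (b := j + k) (by simp only [Set.mem_Ico] at hi ⊢; omega)
      (by simp only [Set.mem_Ico] at hj ⊢; omega) (by omega)
    rwa [shiftPerm_apply_add, shiftPerm_apply_add, Nat.add_lt_add_iff_right] at this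
  · obtain ⟨i, rfl⟩ := Nat.exists_eq_add_of_le' ((Nat.le_add_right k a).trans (Set.mem_Ico.1 hi).1)
    obtain ⟨j, rfl⟩ := Nat.exists_eq_add_of_le' ((Nat.le_add_right k a).trans (Set.mem_Ico.1 hj).1)
    rw [shiftPerm_apply_add, shiftPerm_apply_add, Nat.add_lt_add_iff_right]
    exact h (by simp only [Set.mem_Ico] at hi ⊢; omega) (by simp only [Set.mem_Ico] at hj ⊢; omega)
      (by omega)

theorem inversions_shiftPerm (k r : ℕ) (σ : Perm ℕ) :
    inversions (k + r) (shiftPerm k σ) =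
      (inversions r σ).map ((addRightEmbedding k).prodMap (addRightEmbedding k)) := by
  ext ⟨i, j⟩
  simp only [Finset.mem_map, mem_inversions, Prod.exists, Function.Embedding.coe_prodMap,
    Prod.map_apply, addRightEmbedding_apply, Prod.mk.injEq]
  constructor
  · rintro ⟨hn, hij, hinv⟩
    have hi : k ≤ i := by
      by_contra hi
      exact (supportedOn_Ici_shiftPerm.apply_lt_apply hij (Or.inl hi)).not_gt hinv
    obtain ⟨i, rfl⟩ := Nat.exists_eq_add_of_le' hi
    obtain ⟨j, rfl⟩ := Nat.exists_eq_add_of_le' (hi.trans hij.le)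
    rw [shiftPerm_apply_add, shiftPerm_apply_add] at hinv
    exact ⟨i, j, ⟨⟨by omega, by omega⟩, by omega, by omega⟩, rfl, rfl⟩
  · rintro ⟨i, j, ⟨hn, hij, hinv⟩, rfl, rfl⟩
    rw [shiftPerm_apply_add, shiftPerm_apply_add]
    exact ⟨⟨by omega, by omega⟩, by omega, by omega⟩

theorem invLen_shiftPerm (k r : ℕ) (σ : Perm ℕ) : invLen (k + r) (shiftPerm k σ) = invLen r σ := by
  rw [invLen_eq_card_inversions, inversions_shiftPerm, Finset.card_map]
  rfl

def shiftEmbedding (k : ℕ) : Perm ℕ ↪ Perm ℕ := ⟨shiftPerm k, shiftPerm_injective k⟩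

end Shift

section CosetReps

theorem permOfFin_injective (n : ℕ) : Function.Injective (permOfFin (n := n)) :=
  Perm.extendDomainHom_injective Fin.equivSubtype

def finPerms (n : ℕ) : Finset (Perm ℕ) := Finset.univ.map ⟨permOfFin, permOfFin_injective n⟩

theorem supportedOn_permOfFin {n : ℕ} (σ : Perm (Fin n)) :
    SupportedOn (Set.Iio n) (permOfFin σ) :=
  supportedOn_extendDomain _ σ

theorem mem_finPerms {n : ℕ} {σ : Perm ℕ} : σ ∈ finPerms n ↔ SupportedOn (Set.Iio n) σ := by
  simp only [finPerms, Finset.mem_map, Finset.mem_univ, true_and]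
  exact ⟨by rintro ⟨τ, rfl⟩; exact supportedOn_permOfFin τ,
    fun h => h.exists_extendDomain_eq Fin.equivSubtype⟩

open Classical in
noncomputable def cosetReps (a b : ℕ) : Finset (Perm ℕ) := (finPerms (a + b)).filter (isDist a b)

open Classical in
noncomputable def cosetReps3 (k l m : ℕ) : Finset (Perm ℕ) :=
  (finPerms (k + l + m)).filter (isDist3 k l m)

theorem mem_cosetReps {a b : ℕ} {σ : Perm ℕ} :
    σ ∈ cosetReps a b ↔ SupportedOn (Set.Iio (a + b)) σ ∧
      StrictMonoOn σ (Set.Iio a) ∧ StrictMonoOn σ (Set.Ico a (a + b)) := by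
  simp only [cosetReps, Finset.mem_filter, mem_finPerms, isDist_iff]

theorem mem_cosetReps3 {k l m : ℕ} {σ : Perm ℕ} :
    σ ∈ cosetReps3 k l m ↔ SupportedOn (Set.Iio (k + l + m)) σ ∧ StrictMonoOn σ (Set.Iio k) ∧
      StrictMonoOn σ (Set.Ico k (k + l)) ∧ StrictMonoOn σ (Set.Ico (k + l) (k + l + m)) := by
  simp only [cosetReps3, Finset.mem_filter, mem_finPerms, isDist3_iff]

theorem invLen_le_of_mem_cosetReps {a b n : ℕ} {σ : Perm ℕ} (hσ : σ ∈ cosetReps a b)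
    (hn : a + b ≤ n) : invLen n σ ≤ a * b := by
  obtain ⟨hsupp, h₁, h₂⟩ := mem_cosetReps.1 hσ
  rw [hsupp.invLen_eq hn]
  exact invLen_le_mul h₁ h₂

noncomputable def shiftedCosetReps (k l m : ℕ) : Finset (Perm ℕ) :=
  (cosetReps l m).map (shiftEmbedding k)

theorem mem_shiftedCosetReps {k l m : ℕ} {w : Perm ℕ} :
    w ∈ shiftedCosetReps k l m ↔ SupportedOn (Set.Ico k (k + (l + m))) w ∧
      StrictMonoOn w (Set.Ico k (k + l)) ∧ StrictMonoOn w (Set.Ico (k + l) (k + (l + m))) := by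
  have key : ∀ σ, shiftPerm k σ ∈ shiftedCosetReps k l m ↔
      SupportedOn (Set.Ico k (k + (l + m))) (shiftPerm k σ) ∧
      StrictMonoOn (shiftPerm k σ) (Set.Ico k (k + l)) ∧
      StrictMonoOn (shiftPerm k σ) (Set.Ico (k + l) (k + (l + m))) := fun σ => by
    have h₀ := strictMonoOn_shiftPerm_Ico_iff (k := k) (σ := σ) (a := 0) (b := l)
    rw [add_zero, show Set.Ico 0 l = Set.Iio l from Set.Ico_bot] at h₀
    refine (Finset.mem_map' (shiftEmbedding k)).trans ?_
    rw [mem_cosetReps, supportedOn_Ico_shiftPerm_iff, h₀, strictMonoOn_shiftPerm_Ico_iff]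
  constructor
  · intro hw
    obtain ⟨σ, -, rfl⟩ := Finset.mem_map.1 hw
    exact (key σ).1 hw
  · intro hw
    obtain ⟨σ, rfl⟩ := (hw.1.mono Set.Ico_subset_Ici_self).exists_shiftPerm_eq
    exact (key σ).2 hw

theorem invLen_le_of_mem_shiftedCosetReps {k l m n : ℕ} {w : Perm ℕ}
    (hw : w ∈ shiftedCosetReps k l m) (hn : k + (l + m) ≤ n) : invLen n w ≤ l * m := by
  obtain ⟨σ, hσ, rfl⟩ := Finset.mem_map.1 hw
  have hsupp := (mem_shiftedCosetReps.1 hw).1.mono Set.Ico_subset_Iio_self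
  rw [hsupp.invLen_eq hn, shiftEmbedding, Function.Embedding.coeFn_mk, invLen_shiftPerm]
  exact invLen_le_of_mem_cosetReps hσ le_rfl

end CosetReps

section Antisymmetrizer

def IsLengthMultiplicative {H : Type*} [Mul H] (n : ℕ) (T : Perm ℕ → H) : Prop :=
  ∀ π σ : Perm ℕ, SupportedOn (Set.Iio n) π → SupportedOn (Set.Iio n) σ →
    invLen n (π * σ) = invLen n π + invLen n σ → T (π * σ) = T π * T σ

variable {K H : Type*} [Field K] [Ring H] [Algebra K H] (T : Perm ℕ → H) (q : K)

def antisymSum (n N : ℕ) (A : Finset (Perm ℕ)) : H :=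
  ∑ σ ∈ A, ((-1 : K) ^ invLen n σ * q ^ (N - invLen n σ)) • T σ

theorem yQ_eq_antisymSum {a b n : ℕ} (hn : a + b ≤ n) :
    yQ T q a b = antisymSum T q n (a * b) (cosetReps a b) := by
  classical
  rw [antisymSum, cosetReps, Finset.sum_filter, finPerms, Finset.sum_map]
  refine Finset.sum_congr rfl fun σ _ => ?_
  simp only [Function.Embedding.coeFn_mk]
  rw [(supportedOn_permOfFin σ).invLen_eq hn]

theorem yQShift_eq_antisymSum {k l m n : ℕ} (hn : k + (l + m) ≤ n) :
    yQShift T q k l m = antisymSum T q n (l * m) (shiftedCosetReps k l m) := by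
  classical
  rw [antisymSum, shiftedCosetReps, Finset.sum_map, cosetReps, Finset.sum_filter, finPerms,
    Finset.sum_map]
  refine Finset.sum_congr rfl fun σ _ => ?_
  have hsupp : SupportedOn (Set.Iio (k + (l + m))) (shiftPerm k (permOfFin σ)) :=
    (supportedOn_Ico_shiftPerm_iff.2 (supportedOn_permOfFin σ)).mono Set.Ico_subset_Iio_self
  simp only [Function.Embedding.coeFn_mk, shiftEmbedding]
  rw [hsupp.invLen_eq hn, invLen_shiftPerm]

theorem yQ3_eq_antisymSum (k l m : ℕ) :
    yQ3 T q k l m = antisymSum T q (k + l + m) (k * l + k * m + l * m) (cosetReps3 k l m) := by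
  classical
  rw [antisymSum, cosetReps3, Finset.sum_filter, finPerms, Finset.sum_map]
  rfl

-- The bounds `invLen n · ≤ N` make the truncated exponents `N - ℓ` add up.
theorem antisymSum_mul_antisymSum {n NA NB : ℕ} {A B C : Finset (Perm ℕ)}
    (hT : IsLengthMultiplicative n T)
    (hA : ∀ π ∈ A, SupportedOn (Set.Iio n) π ∧ invLen n π ≤ NA)
    (hB : ∀ w ∈ B, SupportedOn (Set.Iio n) w ∧ invLen n w ≤ NB)
    (hlen : ∀ π ∈ A, ∀ w ∈ B, invLen n (π * w) = invLen n π + invLen n w)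
    (hbij : Set.BijOn (fun p : Perm ℕ × Perm ℕ => p.1 * p.2) (↑A ×ˢ ↑B) ↑C) :
    antisymSum T q n NA A * antisymSum T q n NB B = antisymSum T q n (NA + NB) C := by
  rw [← Finset.coe_product] at hbij
  rw [antisymSum, antisymSum, Finset.sum_mul_sum, ← Finset.sum_product']
  refine Finset.sum_nbij (fun p => p.1 * p.2) (fun p hp => hbij.mapsTo hp) hbij.injOn
    hbij.surjOn ?_
  rintro ⟨π, w⟩ hp
  obtain ⟨hπ, hw⟩ := Finset.mem_product.1 hp
  obtain ⟨hπn, hπN⟩ := hA π hπ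
  obtain ⟨hwn, hwN⟩ := hB w hw
  have hlen' := hlen π hπ w hw
  rw [smul_mul_smul_comm, ← hT π w hπn hwn hlen', hlen',
    show NA + NB - (invLen n π + invLen n w) = (NA - invLen n π) + (NB - invLen n w) by omega]
  congr 1
  ring

end Antisymmetrizer

section Factorization

theorem bijOn_cosetReps_mul_cosetReps (k l m : ℕ) :
    Set.BijOn (fun p : Perm ℕ × Perm ℕ => p.1 * p.2)
      (↑(cosetReps (k + l) m) ×ˢ ↑(cosetReps k l)) ↑(cosetReps3 k l m) := by
  have hS : ((Finset.range (k + l) : Finset ℕ) : Set ℕ) = Set.Iio (k + l) := Finset.coe_range _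
  refine bijOn_mul_of_iff (S := Finset.range (k + l)) (fun π hπ => hS ▸ (mem_cosetReps.1 hπ).2.1)
    (fun w hw => hS ▸ (mem_cosetReps.1 hw).1) fun π w hπ hw => ?_
  rw [hS] at hπ hw
  have hsub : Set.Iio (k + l) ⊆ Set.Iio (k + l + m) := Set.Iio_subset_Iio (Nat.le_add_right _ _)
  simp only [Finset.mem_coe, mem_cosetReps, mem_cosetReps3]
  have hdisj : Set.Ico (k + l) (k + l + m) ⊆ (Set.Iio (k + l))ᶜ := fun x hx => not_lt.2 hx.1
  rw [hw.supportedOn_mul_iff hsub,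
    StrictMonoOn.strictMonoOn_mul_iff_of_subset hπ hw (Set.Iio_subset_Iio le_self_add),
    StrictMonoOn.strictMonoOn_mul_iff_of_subset hπ hw Set.Ico_subset_Iio_self,
    hw.strictMonoOn_mul_iff_of_subset_compl hdisj]
  tauto

theorem bijOn_cosetReps_mul_shiftedCosetReps (k l m : ℕ) :
    Set.BijOn (fun p : Perm ℕ × Perm ℕ => p.1 * p.2)
      (↑(cosetReps k (l + m)) ×ˢ ↑(shiftedCosetReps k l m)) ↑(cosetReps3 k l m) := by
  have hS : ((Finset.Ico k (k + (l + m)) : Finset ℕ) : Set ℕ) = Set.Ico k (k + (l + m)) :=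
    Finset.coe_Ico _ _
  refine bijOn_mul_of_iff (S := Finset.Ico k (k + (l + m)))
    (fun π hπ => hS ▸ (mem_cosetReps.1 hπ).2.2) (fun w hw => hS ▸ (mem_shiftedCosetReps.1 hw).1)
    fun π w hπ hw => ?_
  rw [hS] at hπ hw
  simp only [Finset.mem_coe, mem_cosetReps, mem_cosetReps3, mem_shiftedCosetReps, add_assoc]
  have hdisj : Set.Iio k ⊆ (Set.Ico k (k + (l + m)))ᶜ := fun x hx h => not_le.2 hx h.1
  rw [hw.supportedOn_mul_iff Set.Ico_subset_Iio_self,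
    hw.strictMonoOn_mul_iff_of_subset_compl hdisj,
    StrictMonoOn.strictMonoOn_mul_iff_of_subset hπ hw (Set.Ico_subset_Ico_right (by omega)),
    StrictMonoOn.strictMonoOn_mul_iff_of_subset hπ hw (Set.Ico_subset_Ico_left (by omega))]
  tauto

end Factorization

section Associativity

variable {K H : Type*} [Field K] [Ring H] [Algebra K H] (T : Perm ℕ → H) (q : K) {k l m : ℕ}

theorem yQ_mul_yQ_eq_yQ3 (hT : IsLengthMultiplicative (k + l + m) T) :
    yQ T q (k + l) m * yQ T q k l = yQ3 T q k l m := by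
  have hkl : k + l ≤ k + l + m := Nat.le_add_right _ _
  rw [yQ_eq_antisymSum T q le_rfl, yQ_eq_antisymSum T q hkl, yQ3_eq_antisymSum,
    show k * l + k * m + l * m = (k + l) * m + k * l by ring]
  refine antisymSum_mul_antisymSum T q hT
    (fun π hπ => ⟨(mem_cosetReps.1 hπ).1, invLen_le_of_mem_cosetReps hπ le_rfl⟩)
    (fun w hw => ⟨(mem_cosetReps.1 hw).1.mono (Set.Iio_subset_Iio hkl),
      invLen_le_of_mem_cosetReps hw hkl⟩)
    (fun π hπ w hw => invLen_mul (Set.Iio_subset_Iio hkl) (mem_cosetReps.1 hπ).2.1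
      (mem_cosetReps.1 hw).1)
    (bijOn_cosetReps_mul_cosetReps k l m)

theorem yQ_mul_yQShift_eq_yQ3 (hT : IsLengthMultiplicative (k + l + m) T) :
    yQ T q k (l + m) * yQShift T q k l m = yQ3 T q k l m := by
  have hn : k + (l + m) ≤ k + l + m := (add_assoc k l m).ge
  have hsub : Set.Ico k (k + (l + m)) ⊆ Set.Iio (k + l + m) :=
    Set.Ico_subset_Iio_self.trans (Set.Iio_subset_Iio hn)
  rw [yQ_eq_antisymSum T q hn, yQShift_eq_antisymSum T q hn, yQ3_eq_antisymSum,
    show k * l + k * m + l * m = k * (l + m) + l * m by ring]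
  refine antisymSum_mul_antisymSum T q hT
    (fun π hπ => ⟨(mem_cosetReps.1 hπ).1.mono (Set.Iio_subset_Iio hn),
      invLen_le_of_mem_cosetReps hπ hn⟩)
    (fun w hw => ⟨(mem_shiftedCosetReps.1 hw).1.mono hsub,
      invLen_le_of_mem_shiftedCosetReps hw hn⟩)
    (fun π hπ w hw => invLen_mul hsub (mem_cosetReps.1 hπ).2.2 (mem_shiftedCosetReps.1 hw).1)
    (bijOn_cosetReps_mul_shiftedCosetReps k l m)

end Associativity

end PartialAntisymmetrizer

theorem stmt9_general {K H : Type*} [Field K] [Ring H] [Algebra K H] (q : K) (k l m : ℕ)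
    (T : Equiv.Perm ℕ → H)
    (hTmul : ∀ π σ : Equiv.Perm ℕ,
      (∀ j, k + l + m ≤ j → π j = j) → (∀ j, k + l + m ≤ j → σ j = j) →
      invLen (k + l + m) (π * σ) = invLen (k + l + m) π + invLen (k + l + m) σ →
        T (π * σ) = T π * T σ) :
    yQ T q (k + l) m * yQ T q k l = yQ T q k (l + m) * yQShift T q k l m ∧
    yQ T q (k + l) m * yQ T q k l = yQ3 T q k l m := by
  have hT : PartialAntisymmetrizer.IsLengthMultiplicative (k + l + m) T := fun π σ hπ hσ =>
    hTmul π σ (fun j hj => hπ j (not_lt.2 hj)) (fun j hj => hσ j (not_lt.2 hj))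
  have hleft := PartialAntisymmetrizer.yQ_mul_yQ_eq_yQ3 T q hT
  exact ⟨hleft.trans (PartialAntisymmetrizer.yQ_mul_yQShift_eq_yQ3 T q hT).symm, hleft⟩

/-- In the Hecke algebra `H_{k+l+m}(q)`, the partial antisymmetrizers satisfy
`y_{k+l+m/k+l,m} · y_{k+l/k,l} = y_{k+l+m/k,l+m} · y_{l+m/l,m}^{(k)}`, both sides being
equal to `y(S_{k+l+m}/S_{k,l,m})`. -/
theorem stmt9 {K H : Type*} [Field K] [Ring H] [Algebra K H] (q : K) (k l m : ℕ)
    (T : Equiv.Perm ℕ → H)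
    (hT1 : T 1 = 1)
    (hTq : ∀ i : ℕ, i + 1 < k + l + m →
      (T (tau i) - algebraMap K H q) * (T (tau i) + 1) = 0)
    (hTmul : ∀ π σ : Equiv.Perm ℕ,
      (∀ j, k + l + m ≤ j → π j = j) → (∀ j, k + l + m ≤ j → σ j = j) →
      invLen (k + l + m) (π * σ) = invLen (k + l + m) π + invLen (k + l + m) σ →
        T (π * σ) = T π * T σ) :
    yQ T q (k + l) m * yQ T q k l = yQ T q k (l + m) * yQShift T q k l m ∧
    yQ T q (k + l) m * yQ T q k l = yQ3 T q k l m :=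
  stmt9_general q k l m T hTmul
end

section
/- Let k be a field of characteristic ≠ 2,3 containing a primitive cube root of unity, let a, c ∈ k with abc ≠ 0 (b = a) and suppose 2κ² + 2κ = 1 where κ = a/c, and suppose λ, q ∈ k satisfy λ(ε − ε²) = q(1+q+q²), λ²(1+2κ)(ε² − ε) = q³(1+q+q²), and (3+6κ)λ³ = q⁶, where ε is a primitive cube root of unity and λ ≠ 0, q ≠ 0. Then a contradiction follows: these equations have no common solution. (Equivalently: from the first two equations (1+2κ)λ = −q², and since (1+2κ)² = 3, one gets (3+6κ)λ³ = ((1+2κ)λ)³ = −q⁶ ≠ q⁶.) -/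
/-!
Comparing the two equations in `λ` and `q` gives `q(1+q+q²)((1+2κ)λ + q²) = 0`, and the first
factor cannot vanish because `λ(ε − ε²) ≠ 0`; hence `(1+2κ)λ = −q²`. Since `2κ² + 2κ = 1` means
`(1+2κ)² = 3`, we have `3 + 6κ = (1+2κ)³`, so the third equation reads `−q⁶ = q⁶`, impossible in
characteristic `≠ 2`.
-/

lemma sub_sq_ne_zero_of_one_add_add_sq_eq_zero {k : Type*} [Field k] (hchar3 : (3 : k) ≠ 0)
    {ε : k} (hε : 1 + ε + ε ^ 2 = 0) : ε - ε ^ 2 ≠ 0 := by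
  have hε0 : ε ≠ 0 := by
    rintro rfl
    norm_num at hε
  have hε1 : 1 - ε ≠ 0 := by
    intro h
    obtain rfl : ε = 1 := by linear_combination -h
    norm_num at hε
    exact hchar3 hε
  calc ε - ε ^ 2 = ε * (1 - ε) := by ring
    _ ≠ 0 := mul_ne_zero hε0 hε1

lemma mul_eq_neg_sq_of_mul_eq_of_sq_mul_neg_eq {k : Type*} [Field k] {s lam q d P : k}
    (hne : lam * d ≠ 0) (e1 : lam * d = q * P) (e2 : lam ^ 2 * s * -d = q ^ 3 * P) :
    s * lam = -q ^ 2 := by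
  have hqP : q * P ≠ 0 := e1 ▸ hne
  have h : (s * lam + q ^ 2) * (q * P) = 0 := by
    linear_combination (-s * lam) * e1 - e2
  linear_combination (mul_eq_zero.mp h).resolve_right hqP

lemma three_add_six_mul_eq_one_add_two_mul_pow_three {k : Type*} [CommRing k] {κ : k}
    (hκ : 2 * κ ^ 2 + 2 * κ = 1) : 3 + 6 * κ = (1 + 2 * κ) ^ 3 := by
  linear_combination (-2 - 4 * κ) * hκ

theorem stmt19_general {k : Type*} [Field k] (hchar2 : (2 : k) ≠ 0) (hchar3 : (3 : k) ≠ 0)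
    (ε κ lam q : k) (hε : 1 + ε + ε ^ 2 = 0)
    (hkey : 2 * κ ^ 2 + 2 * κ = 1)
    (hlam : lam ≠ 0) (hq : q ≠ 0)
    (e1 : lam * (ε - ε ^ 2) = q * (1 + q + q ^ 2))
    (e2 : lam ^ 2 * (1 + 2 * κ) * (ε ^ 2 - ε) = q ^ 3 * (1 + q + q ^ 2))
    (e3 : (3 + 6 * κ) * lam ^ 3 = q ^ 6) : False := by
  have hne : lam * (ε - ε ^ 2) ≠ 0 :=
    mul_ne_zero hlam (sub_sq_ne_zero_of_one_add_add_sq_eq_zero hchar3 hε)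
  have hlin : (1 + 2 * κ) * lam = -q ^ 2 :=
    mul_eq_neg_sq_of_mul_eq_of_sq_mul_neg_eq hne e1 (by rw [neg_sub]; exact e2)
  have hcube : (3 + 6 * κ) * lam ^ 3 = -q ^ 6 := by
    rw [three_add_six_mul_eq_one_add_two_mul_pow_three hkey, ← mul_pow, hlin]
    ring
  have h2 : 2 * q ^ 6 = 0 := by linear_combination hcube - e3
  exact mul_ne_zero hchar2 (pow_ne_zero 6 hq) h2

/-- The elimination argument in Case 4 of Theorem 5.1: over a field of characteristic
`≠ 2, 3` with a primitive cube root of unity `ε`, if `b = a`, `abc ≠ 0`, `κ = a/c`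
satisfies `2κ² + 2κ = 1`, and `λ ≠ 0`, `q ≠ 0` satisfy `λ(ε − ε²) = q(1+q+q²)`,
`λ²(1+2κ)(ε² − ε) = q³(1+q+q²)` and `(3+6κ)λ³ = q⁶`, then a contradiction follows. -/
theorem stmt19 {k : Type*} [Field k] (hchar2 : (2 : k) ≠ 0) (hchar3 : (3 : k) ≠ 0)
    (ε a b c κ lam q : k) (hε3 : ε ^ 3 = 1) (hε : 1 + ε + ε ^ 2 = 0)
    (hb : b = a) (habc : a * b * c ≠ 0) (hκ : κ = a / c) (hkey : 2 * κ ^ 2 + 2 * κ = 1)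
    (hlam : lam ≠ 0) (hq : q ≠ 0)
    (e1 : lam * (ε - ε ^ 2) = q * (1 + q + q ^ 2))
    (e2 : lam ^ 2 * (1 + 2 * κ) * (ε ^ 2 - ε) = q ^ 3 * (1 + q + q ^ 2))
    (e3 : (3 + 6 * κ) * lam ^ 3 = q ^ 6) : False :=
  stmt19_general hchar2 hchar3 ε κ lam q hε hkey hlam hq e1 e2 e3
end
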